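/- arXiv:1602.02063 — 5 statements merged into one kernel-verified Lean document; each statement's English description precedes it below -/
import Mathlib

section
/- Suppose m = n = T (no redundant players). Then the maximin value and the minimax value of the team competition coincide and both equal the uniform average over all matchings: V(∅,∅,0) = W(∅,∅,0) = (1/T!)·Σ_{σ ∈ S_T} Σ_{S ⊆ {1,…,T}} U(|S|)·∏_{i∈S} P i σ(i)·∏_{i∉S} (1 − P i σ(i)), where S_T denotes the set of all bijections σ of {1,…,T}. (Equivalently, playing the remaining players uniformly at random in every round is a subgame perfect equilibrium strategy for both teams.) -/
/-- Value function of the team competition `G(T,P,U)`, by backward induction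
(Team 1 maximizes first, i.e. the maximin value).
`gval m n P U r X Y w` is the value of the state where the players in `X` (Team 1)
and `Y` (Team 2) have already played, Team 1 has won `w` rounds so far, and
`r = T - |X|` rounds remain to be played. -/
noncomputable def gval (m n : ℕ) (P : Fin m → Fin n → ℝ) (U : ℕ → ℝ) :
    ℕ → Finset (Fin m) → Finset (Fin n) → ℕ → ℝ
  | 0, _, _, w => U w
  | r + 1, X, Y, w =>
      sSup {v : ℝ | ∃ p : Fin m → ℝ,
        (∀ i, 0 ≤ p i) ∧ (∀ i ∈ X, p i = 0) ∧ (∑ i, p i) = 1 ∧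
        v = sInf {u : ℝ | ∃ j, j ∉ Y ∧
          u = ∑ i, p i *
            (P i j * gval m n P U r (insert i X) (insert j Y) (w + 1) +
             (1 - P i j) * gval m n P U r (insert i X) (insert j Y) w)}}

/-- The minimax value function: the same backward induction with the roles of the
two teams exchanged (Team 2 minimizes first). -/
noncomputable def wval (m n : ℕ) (P : Fin m → Fin n → ℝ) (U : ℕ → ℝ) :
    ℕ → Finset (Fin m) → Finset (Fin n) → ℕ → ℝ
  | 0, _, _, w => U w
  | r + 1, X, Y, w =>
      sInf {v : ℝ | ∃ q : Fin n → ℝ,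
        (∀ j, 0 ≤ q j) ∧ (∀ j ∈ Y, q j = 0) ∧ (∑ j, q j) = 1 ∧
        v = sSup {u : ℝ | ∃ i, i ∉ X ∧
          u = ∑ j, q j *
            (P i j * wval m n P U r (insert i X) (insert j Y) (w + 1) +
             (1 - P i j) * wval m n P U r (insert i X) (insert j Y) w)}}

/-!
By backward induction, the maximin and the minimax value of every state both equal the average,
over all matchings of the players still to play, of the expected utility of playing out that
matching. In the stage game of a state with `k` players left on each side, the entry for the pair
`(i, j)` is (by induction) the average over the matchings that pair `i` with `j`; conditioning the
average on the opponent of a fixed player shows that every row sum and every column sum of the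
stage matrix equals `k` times the average over all matchings. A matrix game with constant row
sums and constant column sums has the common average as its value, attained by uniform play on
either side.
-/

open Finset Function
open scoped Nat

section ExpectedUtility

variable {α : Type*} [DecidableEq α]

noncomputable def expectedUtility (q : α → ℝ) (U : ℕ → ℝ) (s : Finset α) (w : ℕ) : ℝ :=
  ∑ S ∈ s.powerset, U (w + #S) * (∏ i ∈ S, q i) * ∏ i ∈ s \ S, (1 - q i)

lemma expectedUtility_insert {a : α} {s : Finset α} (ha : a ∉ s) (q : α → ℝ) (U : ℕ → ℝ)
    (w : ℕ) :
    expectedUtility q U (insert a s) w =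
      q a * expectedUtility q U s (w + 1) + (1 - q a) * expectedUtility q U s w := by
  rw [expectedUtility, sum_powerset_insert ha, add_comm, expectedUtility, expectedUtility,
    mul_sum, mul_sum]
  congr 1 <;> refine sum_congr rfl fun S hS => ?_ <;>
    have haS : a ∉ S := fun h => ha (mem_powerset.1 hS h)
  · rw [card_insert_of_notMem haS, prod_insert haS, insert_sdiff_insert,
      sdiff_insert_of_notMem ha, ← add_assoc, add_right_comm w]
    ring
  · rw [insert_sdiff_of_notMem _ haS, prod_insert (fun h => ha (mem_sdiff.1 h).1)]
    ring

lemma expectedUtility_congr {q q' : α → ℝ} {s : Finset α} (h : ∀ i ∈ s, q i = q' i)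
    (U : ℕ → ℝ) (w : ℕ) : expectedUtility q U s w = expectedUtility q' U s w := by
  refine sum_congr rfl fun S hS => ?_
  have hS' : ∏ i ∈ S, q i = ∏ i ∈ S, q' i := prod_congr rfl fun i hi => h i (mem_powerset.1 hS hi)
  have hsS : ∏ i ∈ s \ S, (1 - q i) = ∏ i ∈ s \ S, (1 - q' i) :=
    prod_congr rfl fun i hi => by rw [h i (mem_sdiff.1 hi).1]
  rw [hS', hsS]

end ExpectedUtility

section Matchings

variable {α : Type*} [Fintype α] [DecidableEq α]

/-- Bijections `s → t`, extended by the identity outside `s` to make them functions `α → α`. -/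
noncomputable def matchings (s t : Finset α) : Finset (α → α) := by
  classical exact univ.filter fun f => Set.BijOn f s t ∧ ∀ x ∉ s, f x = x

variable {s t : Finset α} {a b : α} {f g : α → α}

lemma mem_matchings : f ∈ matchings s t ↔ Set.BijOn f s t ∧ ∀ x ∉ s, f x = x := by
  simp [matchings]

lemma update_mem_matchings (ha : a ∈ s) (hb : b ∈ t)
    (hg : g ∈ matchings (s.erase a) (t.erase b)) : update g a b ∈ matchings s t := by
  obtain ⟨hbij, hfix⟩ := mem_matchings.1 hg
  have hbij' : Set.BijOn (update g a b) (s.erase a) (t.erase b) :=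
    hbij.congr fun x hx => (update_of_ne (ne_of_mem_erase hx) _ _).symm
  have hins := hbij'.insert (a := a) (by simp)
  rw [update_self, ← coe_insert, ← coe_insert, insert_erase ha, insert_erase hb] at hins
  refine mem_matchings.2 ⟨hins, fun x hx => ?_⟩
  rw [update_of_ne (ne_of_mem_of_not_mem ha hx).symm, hfix x (fun h => hx (mem_of_mem_erase h))]

lemma update_self_mem_matchings (ha : a ∈ s) (hf : f ∈ matchings s t) :
    update f a a ∈ matchings (s.erase a) (t.erase (f a)) := by
  obtain ⟨hbij, hfix⟩ := mem_matchings.1 hf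
  refine mem_matchings.2 ⟨?_, fun x hx => ?_⟩
  · rw [coe_erase, coe_erase]
    exact (hbij.sdiff_singleton ha).congr fun x hx => (update_of_ne hx.2 _ _).symm
  · rcases eq_or_ne x a with rfl | hxa
    · exact update_self _ _ _
    · rw [update_of_ne hxa, hfix x fun h => hx (mem_erase.2 ⟨hxa, h⟩)]

lemma sum_filter_matchings_apply_eq (ha : a ∈ s) (hb : b ∈ t) (F : (α → α) → ℝ) :
    ∑ f ∈ matchings s t with f a = b, F f =
      ∑ g ∈ matchings (s.erase a) (t.erase b), F (update g a b) := by
  refine (sum_nbij' (fun g : α → α => update g a b) (fun f : α → α => update f a a) (fun g hg => ?_)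
    (fun f hf => ?_) (fun g hg => ?_) (fun f hf => ?_) fun _ _ => rfl).symm
  · exact mem_filter.2 ⟨update_mem_matchings ha hb hg, update_self _ _ _⟩
  · obtain ⟨hf', rfl⟩ := mem_filter.1 hf
    exact update_self_mem_matchings ha hf'
  · have hga : g a = a := (mem_matchings.1 hg).2 a (notMem_erase a s)
    rw [update_idem, update_eq_iff]
    exact ⟨hga.symm, fun _ _ => rfl⟩
  · obtain ⟨-, rfl⟩ := mem_filter.1 hf
    rw [update_idem, update_eq_self]

lemma sum_matchings_eq_sum_filter_apply_eq_left (hb : b ∈ t) (F : (α → α) → ℝ) :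
    ∑ f ∈ matchings s t, F f = ∑ a ∈ s, ∑ f ∈ matchings s t with f a = b, F f := by
  simp_rw [sum_filter]
  rw [sum_comm]
  refine sum_congr rfl fun f hf => ?_
  obtain ⟨hbij, -⟩ := mem_matchings.1 hf
  obtain ⟨a₀, ha₀, hfa₀⟩ := hbij.surjOn hb
  rw [sum_eq_single_of_mem a₀ ha₀ fun a ha hne => if_neg fun h => hne (hbij.injOn ha ha₀
    (h.trans hfa₀.symm)), if_pos hfa₀]

lemma sum_matchings_eq_sum_filter_apply_eq_right (ha : a ∈ s) (F : (α → α) → ℝ) :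
    ∑ f ∈ matchings s t, F f = ∑ b ∈ t, ∑ f ∈ matchings s t with f a = b, F f :=
  (sum_fiberwise_of_maps_to (fun _ hf => (mem_matchings.1 hf).1.mapsTo ha) F).symm

variable (P : α → α → ℝ) (U : ℕ → ℝ)

noncomputable def matchingSum (s t : Finset α) (w : ℕ) : ℝ :=
  ∑ f ∈ matchings s t, expectedUtility (fun i => P i (f i)) U s w

/-- When `#s = #t`, `(#s)!` is the number of matchings. -/
noncomputable def matchValue (s t : Finset α) (w : ℕ) : ℝ :=
  ((#s)! : ℝ)⁻¹ * matchingSum P U s t w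

noncomputable def matchStage (s t : Finset α) (w : ℕ) (a b : α) : ℝ :=
  P a b * matchValue P U (s.erase a) (t.erase b) (w + 1) +
    (1 - P a b) * matchValue P U (s.erase a) (t.erase b) w

variable {P U}

lemma sum_filter_matchings_expectedUtility (ha : a ∈ s) (hb : b ∈ t) (w : ℕ) :
    ∑ f ∈ matchings s t with f a = b, expectedUtility (fun i => P i (f i)) U s w =
      P a b * matchingSum P U (s.erase a) (t.erase b) (w + 1) +
        (1 - P a b) * matchingSum P U (s.erase a) (t.erase b) w := by
  rw [sum_filter_matchings_apply_eq ha hb, matchingSum, matchingSum, mul_sum, mul_sum,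
    ← sum_add_distrib]
  refine sum_congr rfl fun g _ => ?_
  have hupdate : ∀ i ∈ s.erase a, P i (update g a b i) = P i (g i) := fun i hi => by
    rw [update_of_ne (ne_of_mem_erase hi)]
  conv_lhs => rw [← insert_erase ha]
  rw [expectedUtility_insert (notMem_erase a s), update_self,
    expectedUtility_congr hupdate, expectedUtility_congr hupdate]

lemma matchStage_eq (ha : a ∈ s) (hb : b ∈ t) (w : ℕ) :
    matchStage P U s t w a b =
      #s / ((#s)! : ℝ) * ∑ f ∈ matchings s t with f a = b,
        expectedUtility (fun i => P i (f i)) U s w := by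
  rw [sum_filter_matchings_expectedUtility ha hb, matchStage, matchValue, matchValue,
    card_erase_of_mem ha, ← Nat.mul_factorial_pred (card_ne_zero_of_mem ha)]
  have : (#s : ℝ) ≠ 0 := Nat.cast_ne_zero.2 (card_ne_zero_of_mem ha)
  push_cast
  field_simp

lemma sum_matchStage_left (hb : b ∈ t) (w : ℕ) :
    ∑ a ∈ s, matchStage P U s t w a b = #s * matchValue P U s t w := by
  rw [sum_congr rfl fun a ha => matchStage_eq ha hb w, ← mul_sum,
    ← sum_matchings_eq_sum_filter_apply_eq_left hb, matchValue, matchingSum, div_eq_mul_inv,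
    mul_assoc]

lemma sum_matchStage_right (ha : a ∈ s) (w : ℕ) :
    ∑ b ∈ t, matchStage P U s t w a b = #s * matchValue P U s t w := by
  rw [sum_congr rfl fun b hb => matchStage_eq ha hb w, ← mul_sum,
    ← sum_matchings_eq_sum_filter_apply_eq_right ha, matchValue, matchingSum, div_eq_mul_inv,
    mul_assoc]

lemma matchValue_empty (w : ℕ) : matchValue P U ∅ ∅ w = U w := by
  have : matchings (∅ : Finset α) ∅ = {id} := by
    ext f
    simp [mem_matchings, funext_iff]
  simp [matchValue, matchingSum, this, expectedUtility]

lemma matchValue_univ (w : ℕ) :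
    matchValue P U univ univ w = ((Fintype.card α)! : ℝ)⁻¹ * ∑ σ : Equiv.Perm α,
      ∑ S : Finset α, U (w + #S) * (∏ i ∈ S, P i (σ i)) * ∏ i ∈ Sᶜ, (1 - P i (σ i)) := by
  rw [matchValue, card_univ, matchingSum]
  congr 1
  refine (sum_bij (fun (σ : Equiv.Perm α) _ => ⇑σ) (fun σ _ => mem_matchings.2 ⟨?_, by simp⟩)
    (fun σ _ τ _ h => DFunLike.coe_injective h) (fun f hf => ?_) fun σ _ => ?_).symm
  · simp
  · have hbij : Bijective f := by simpa using (mem_matchings.1 hf).1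
    exact ⟨Equiv.ofBijective f hbij, mem_univ _, rfl⟩
  · simp [expectedUtility, compl_eq_univ_sdiff]

end Matchings

section MatrixGame

variable {ι κ : Type*}

noncomputable def maximin [Fintype ι] (X : Finset ι) (Y : Finset κ) (A : ι → κ → ℝ) : ℝ :=
  sSup {v : ℝ | ∃ p : ι → ℝ, (∀ i, 0 ≤ p i) ∧ (∀ i ∈ X, p i = 0) ∧ (∑ i, p i) = 1 ∧
    v = sInf {u : ℝ | ∃ j, j ∉ Y ∧ u = ∑ i, p i * A i j}}

noncomputable def minimax [Fintype κ] (X : Finset ι) (Y : Finset κ) (A : ι → κ → ℝ) : ℝ :=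
  sInf {v : ℝ | ∃ q : κ → ℝ, (∀ j, 0 ≤ q j) ∧ (∀ j ∈ Y, q j = 0) ∧ (∑ j, q j) = 1 ∧
    v = sSup {u : ℝ | ∃ i, i ∉ X ∧ u = ∑ j, q j * A i j}}

lemma minimax_eq_neg_maximin [Fintype κ] (X : Finset ι) (Y : Finset κ) (A : ι → κ → ℝ) :
    minimax X Y A = -maximin Y X fun j i => -A i j := by
  have hpayoff : ∀ q : κ → ℝ, {u : ℝ | ∃ i, i ∉ X ∧ u = ∑ j, q j * -A i j} =
      -{u : ℝ | ∃ i, i ∉ X ∧ u = ∑ j, q j * A i j} := fun q => by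
    ext u
    simp [neg_eq_iff_eq_neg]
  have hvalues : {v : ℝ | ∃ q : κ → ℝ, (∀ j, 0 ≤ q j) ∧ (∀ j ∈ Y, q j = 0) ∧
      (∑ j, q j) = 1 ∧ v = sInf {u : ℝ | ∃ i, i ∉ X ∧ u = ∑ j, q j * -A i j}} =
      -{v : ℝ | ∃ q : κ → ℝ, (∀ j, 0 ≤ q j) ∧ (∀ j ∈ Y, q j = 0) ∧ (∑ j, q j) = 1 ∧
        v = sSup {u : ℝ | ∃ i, i ∉ X ∧ u = ∑ j, q j * A i j}} := by
    ext v
    simp only [hpayoff, Real.sInf_neg, Set.mem_neg, Set.mem_ofPred_eq, neg_eq_iff_eq_neg]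
  rw [minimax, maximin, hvalues, Real.sSup_neg, neg_neg]

variable [Fintype ι] [DecidableEq ι] [Fintype κ] [DecidableEq κ]

lemma sum_mul_eq_sum_compl_mul {X : Finset ι} {p : ι → ℝ} (hp : ∀ i ∈ X, p i = 0)
    (g : ι → ℝ) : ∑ i, p i * g i = ∑ i ∈ Xᶜ, p i * g i := by
  rw [← sum_compl_add_sum X, sum_eq_zero (s := X) fun i hi => by rw [hp i hi, zero_mul], add_zero]

lemma exists_sum_mul_le {X : Finset ι} {Y : Finset κ} {A : ι → κ → ℝ} {F : ℝ}
    (hY : Yᶜ.Nonempty) (hrow : ∀ i ∈ Xᶜ, ∑ j ∈ Yᶜ, A i j = #Yᶜ * F) {p : ι → ℝ}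
    (hpX : ∀ i ∈ X, p i = 0) (hp : ∑ i, p i = 1) : ∃ j ∉ Y, ∑ i, p i * A i j ≤ F := by
  have hsum : ∑ j ∈ Yᶜ, ∑ i, p i * A i j = ∑ j ∈ Yᶜ, F := by
    calc ∑ j ∈ Yᶜ, ∑ i, p i * A i j = ∑ i ∈ Xᶜ, p i * ∑ j ∈ Yᶜ, A i j := by
          simp_rw [sum_mul_eq_sum_compl_mul hpX, mul_sum]
          exact sum_comm
      _ = (∑ i, p i) * (#Yᶜ * F) := by
          rw [sum_mul, sum_mul_eq_sum_compl_mul hpX fun _ => #Yᶜ * F]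
          exact sum_congr rfl fun i hi => by rw [hrow i hi]
      _ = ∑ j ∈ Yᶜ, F := by rw [hp, one_mul, sum_const, nsmul_eq_mul]
  obtain ⟨j, hj, hle⟩ := exists_le_of_sum_le hY hsum.le
  exact ⟨j, mem_compl.1 hj, hle⟩

lemma sum_uniform_mul_eq {X : Finset ι} {Y : Finset κ} {A : ι → κ → ℝ} {F : ℝ}
    (hX : Xᶜ.Nonempty) (hcol : ∀ j ∈ Yᶜ, ∑ i ∈ Xᶜ, A i j = #Xᶜ * F) {j : κ} (hj : j ∉ Y) :
    ∑ i, (if i ∈ X then 0 else (#Xᶜ : ℝ)⁻¹) * A i j = F := by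
  have hcard : (#Xᶜ : ℝ) ≠ 0 := Nat.cast_ne_zero.2 hX.card_pos.ne'
  rw [sum_mul_eq_sum_compl_mul fun i hi => if_pos hi,
    sum_congr rfl fun i hi => by rw [if_neg (mem_compl.1 hi)], ← mul_sum,
    hcol j (mem_compl.2 hj), inv_mul_cancel_left₀ hcard]

lemma maximin_eq_of_sums {X : Finset ι} {Y : Finset κ} {A : ι → κ → ℝ} {F : ℝ}
    (hX : Xᶜ.Nonempty) (hY : Yᶜ.Nonempty) (hrow : ∀ i ∈ Xᶜ, ∑ j ∈ Yᶜ, A i j = #Yᶜ * F)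
    (hcol : ∀ j ∈ Yᶜ, ∑ i ∈ Xᶜ, A i j = #Xᶜ * F) : maximin X Y A = F := by
  have hbdd : ∀ p : ι → ℝ, BddBelow {u : ℝ | ∃ j, j ∉ Y ∧ u = ∑ i, p i * A i j} := fun p =>
    ((Set.finite_range fun j => ∑ i, p i * A i j).subset
      (by rintro _ ⟨j, -, rfl⟩; exact ⟨j, rfl⟩)).bddBelow
  have hle : ∀ v ∈ {v : ℝ | ∃ p : ι → ℝ, (∀ i, 0 ≤ p i) ∧ (∀ i ∈ X, p i = 0) ∧
      (∑ i, p i) = 1 ∧ v = sInf {u : ℝ | ∃ j, j ∉ Y ∧ u = ∑ i, p i * A i j}}, v ≤ F := by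
    rintro v ⟨p, -, hpX, hp, rfl⟩
    obtain ⟨j, hj, hle⟩ := exists_sum_mul_le hY hrow hpX hp
    exact (csInf_le (hbdd p) ⟨j, hj, rfl⟩).trans hle
  have hmem : F ∈ {v : ℝ | ∃ p : ι → ℝ, (∀ i, 0 ≤ p i) ∧ (∀ i ∈ X, p i = 0) ∧
      (∑ i, p i) = 1 ∧ v = sInf {u : ℝ | ∃ j, j ∉ Y ∧ u = ∑ i, p i * A i j}} := by
    refine ⟨fun i => if i ∈ X then 0 else (#Xᶜ : ℝ)⁻¹, fun i => by positivity,
      fun i hi => if_pos hi, ?_, ?_⟩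
    · rw [← sum_compl_add_sum X, sum_congr rfl fun i hi => if_neg (mem_compl.1 hi),
        sum_congr rfl fun i hi => if_pos hi]
      simp [hX.card_pos.ne']
    · obtain ⟨j₀, hj₀⟩ := hY
      have hconst : {u : ℝ | ∃ j, j ∉ Y ∧ u = ∑ i,
          (if i ∈ X then 0 else (#Xᶜ : ℝ)⁻¹) * A i j} = {F} :=
        Set.eq_singleton_iff_unique_mem.2
          ⟨⟨j₀, mem_compl.1 hj₀, (sum_uniform_mul_eq hX hcol (mem_compl.1 hj₀)).symm⟩,
            by rintro _ ⟨j, hj, rfl⟩; exact sum_uniform_mul_eq hX hcol hj⟩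
      rw [hconst, csInf_singleton]
  exact le_antisymm (csSup_le ⟨F, hmem⟩ hle) (le_csSup ⟨F, hle⟩ hmem)

lemma minimax_eq_of_sums {X : Finset ι} {Y : Finset κ} {A : ι → κ → ℝ} {F : ℝ}
    (hX : Xᶜ.Nonempty) (hY : Yᶜ.Nonempty) (hrow : ∀ i ∈ Xᶜ, ∑ j ∈ Yᶜ, A i j = #Yᶜ * F)
    (hcol : ∀ j ∈ Yᶜ, ∑ i ∈ Xᶜ, A i j = #Xᶜ * F) : minimax X Y A = F := by
  rw [minimax_eq_neg_maximin, maximin_eq_of_sums (F := -F) hY hX, neg_neg]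
  · intro j hj
    rw [sum_neg_distrib, hcol j hj, mul_neg]
  · intro i hi
    rw [sum_neg_distrib, hrow i hi, mul_neg]

end MatrixGame

section Competition

variable {α : Type*} [Fintype α] [DecidableEq α] {P : α → α → ℝ} {U : ℕ → ℝ}
  {X Y : Finset α} {A : α → α → ℝ} {w : ℕ}

lemma maximin_eq_matchValue (hX : Xᶜ.Nonempty) (hXY : #Xᶜ = #Yᶜ)
    (hA : ∀ i ∈ Xᶜ, ∀ j ∈ Yᶜ, A i j = matchStage P U Xᶜ Yᶜ w i j) :
    maximin X Y A = matchValue P U Xᶜ Yᶜ w :=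
  maximin_eq_of_sums hX (card_pos.1 (hXY ▸ hX.card_pos))
    (fun i hi => by rw [sum_congr rfl (hA i hi), sum_matchStage_right hi, hXY])
    fun j hj => by rw [sum_congr rfl fun i hi => hA i hi j hj, sum_matchStage_left hj]

lemma minimax_eq_matchValue (hX : Xᶜ.Nonempty) (hXY : #Xᶜ = #Yᶜ)
    (hA : ∀ i ∈ Xᶜ, ∀ j ∈ Yᶜ, A i j = matchStage P U Xᶜ Yᶜ w i j) :
    minimax X Y A = matchValue P U Xᶜ Yᶜ w :=
  minimax_eq_of_sums hX (card_pos.1 (hXY ▸ hX.card_pos))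
    (fun i hi => by rw [sum_congr rfl (hA i hi), sum_matchStage_right hi, hXY])
    fun j hj => by rw [sum_congr rfl fun i hi => hA i hi j hj, sum_matchStage_left hj]

end Competition

noncomputable def stageGame {ι κ : Type*} [DecidableEq ι] [DecidableEq κ] (P : ι → κ → ℝ)
    (V : Finset ι → Finset κ → ℕ → ℝ) (X : Finset ι) (Y : Finset κ) (w : ℕ) (i : ι) (j : κ) :
    ℝ :=
  P i j * V (insert i X) (insert j Y) (w + 1) + (1 - P i j) * V (insert i X) (insert j Y) w

section Values

variable {m n : ℕ} (P : Fin m → Fin n → ℝ) (U : ℕ → ℝ) (r : ℕ) (X : Finset (Fin m))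
  (Y : Finset (Fin n)) (w : ℕ)

lemma gval_succ : gval m n P U (r + 1) X Y w = maximin X Y (stageGame P (gval m n P U r) X Y w) :=
  rfl

lemma wval_succ : wval m n P U (r + 1) X Y w = minimax X Y (stageGame P (wval m n P U r) X Y w) :=
  rfl

end Values

theorem gval_eq_matchValue_and_wval_eq_matchValue {T : ℕ} (P : Fin T → Fin T → ℝ) (U : ℕ → ℝ)
    (r : ℕ) : ∀ (X Y : Finset (Fin T)) (w : ℕ), #Xᶜ = r → #Yᶜ = r →
      gval T T P U r X Y w = matchValue P U Xᶜ Yᶜ w ∧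
        wval T T P U r X Y w = matchValue P U Xᶜ Yᶜ w := by
  induction r with
  | zero =>
    intro X Y w hX hY
    rw [card_eq_zero.1 hX, card_eq_zero.1 hY, matchValue_empty]
    exact ⟨rfl, rfl⟩
  | succ r ih =>
    intro X Y w hX hY
    have hchild : ∀ i ∈ Xᶜ, ∀ j ∈ Yᶜ, ∀ w',
        gval T T P U r (insert i X) (insert j Y) w' = matchValue P U (Xᶜ.erase i) (Yᶜ.erase j) w' ∧
          wval T T P U r (insert i X) (insert j Y) w' =
            matchValue P U (Xᶜ.erase i) (Yᶜ.erase j) w' := fun i hi j hj w' => by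
      rw [← compl_insert, ← compl_insert]
      exact ih _ _ w' (by rw [compl_insert, card_erase_of_mem hi, hX]; rfl)
        (by rw [compl_insert, card_erase_of_mem hj, hY]; rfl)
    have hX' : Xᶜ.Nonempty := card_pos.1 (by omega)
    have hXY : #Xᶜ = #Yᶜ := hX.trans hY.symm
    rw [gval_succ, wval_succ]
    refine ⟨maximin_eq_matchValue hX' hXY fun i hi j hj => ?_,
      minimax_eq_matchValue hX' hXY fun i hi j hj => ?_⟩
    · rw [stageGame, (hchild i hi j hj _).1, (hchild i hi j hj _).1]; rfl
    · rw [stageGame, (hchild i hi j hj _).2, (hchild i hi j hj _).2]; rfl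

theorem uniform_random_is_SPE_general (T : ℕ)
    (P : Fin T → Fin T → ℝ) (U : ℕ → ℝ) :
    gval T T P U T ∅ ∅ 0 =
      (T.factorial : ℝ)⁻¹ * ∑ σ : Equiv.Perm (Fin T), ∑ S : Finset (Fin T),
        U S.card * (∏ i ∈ S, P i (σ i)) * ∏ i ∈ Sᶜ, (1 - P i (σ i)) ∧
    wval T T P U T ∅ ∅ 0 =
      (T.factorial : ℝ)⁻¹ * ∑ σ : Equiv.Perm (Fin T), ∑ S : Finset (Fin T),
        U S.card * (∏ i ∈ S, P i (σ i)) * ∏ i ∈ Sᶜ, (1 - P i (σ i)) := by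
  obtain ⟨hg, hw⟩ := gval_eq_matchValue_and_wval_eq_matchValue P U T ∅ ∅ 0 (by simp) (by simp)
  rw [compl_empty, matchValue_univ, Fintype.card_fin] at hg hw
  simp only [zero_add] at hg hw
  exact ⟨hg, hw⟩

/-- When `m = n = T` (no redundant players), the maximin and minimax
values of the competition coincide and both equal the uniform average over all
matchings `σ` between the two teams of the expected utility, i.e. playing uniformly
at random is a subgame perfect equilibrium strategy for both teams. -/
theorem uniform_random_is_SPE (T : ℕ) (hT : 1 ≤ T)
    (P : Fin T → Fin T → ℝ) (hP : ∀ i j, P i j ∈ Set.Icc (0 : ℝ) 1) (U : ℕ → ℝ) :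
    gval T T P U T ∅ ∅ 0 =
      (T.factorial : ℝ)⁻¹ * ∑ σ : Equiv.Perm (Fin T), ∑ S : Finset (Fin T),
        U S.card * (∏ i ∈ S, P i (σ i)) * ∏ i ∈ Sᶜ, (1 - P i (σ i)) ∧
    wval T T P U T ∅ ∅ 0 =
      (T.factorial : ℝ)⁻¹ * ∑ σ : Equiv.Perm (Fin T), ∑ S : Finset (Fin T),
        U S.card * (∏ i ∈ S, P i (σ i)) * ∏ i ∈ Sᶜ, (1 - P i (σ i)) :=
  uniform_random_is_SPE_general T P U
end

section
/- If Team 1 plays uniformly at random, then for every adaptive pure strategy g of Team 2 and every bijection s of {1,…,T}, the probability that the final matching M equals s is exactly 1/T!. -/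
/-!
Fix the outcome sequence `c`. The event `M = s` says that Team 1 answered every selection `b`
by `s b`, so the whole play, and with it Team 1's order `α`, is determined by `c`: it is the
play `replyHist` in which Team 1 always replies through `s`, and since Team 2 never reuses a
player, the replies form a permutation `replyPerm`. The sum over `α` therefore collapses to one
term, `(T!)⁻¹` times the probability of `c` along that play, and these probabilities sum to `1`
over `c` because the law of each outcome depends only on the earlier ones.
-/

def histUpTo (T : ℕ) (g : List (Fin T × Fin T × Bool) → Fin T)
    (a : ℕ → Fin T) (c : ℕ → Bool) : ℕ → List (Fin T × Fin T × Bool)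
  | 0 => []
  | k + 1 =>
      histUpTo T g a c k ++
        [(g (histUpTo T g a c k), a k, c k)]

def bpick (T : ℕ) (g : List (Fin T × Fin T × Bool) → Fin T)
    (a : ℕ → Fin T) (c : ℕ → Bool) (k : ℕ) : Fin T :=
  g (histUpTo T g a c k)

def natify {β : Type*} {T : ℕ} (hT : 0 < T) (f : Fin T → β) : ℕ → β :=
  fun k => f ⟨k % T, Nat.mod_lt _ hT⟩

theorem sum_prod_adapted_eq_one {α : Type*} [Fintype α] [Nonempty α] :
    ∀ {n : ℕ} (w : Fin n → (Fin n → α) → α → ℝ),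
      (∀ k c c', (∀ j < k, c j = c' j) → w k c = w k c') →
      (∀ k c, ∑ a, w k c a = 1) →
      ∑ c : Fin n → α, ∏ k, w k c (c k) = 1
  | 0, _, _, _ => by simp
  | n + 1, w, hw, hsum => by
    obtain ⟨a₀⟩ := ‹Nonempty α›
    have hsnoc {c c' : Fin n → α} {m : Fin (n + 1)} (a a' : α)
        (h : ∀ j : Fin n, j.castSucc < m → c j = c' j) (j : Fin (n + 1)) (hj : j < m) :
        (Fin.snoc c a : Fin (n + 1) → α) j = (Fin.snoc c' a' : Fin (n + 1) → α) j := by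
      rw [← Fin.castSucc_castPred j (hj.trans_le (Fin.le_last m)).ne, Fin.snoc_castSucc,
        Fin.snoc_castSucc]
      exact h _ (by rwa [Fin.castSucc_castPred])
    have hstep (c : Fin n → α) :
        ∑ a, ∏ k, w k (Fin.snoc c a) ((Fin.snoc c a : Fin (n + 1) → α) k) =
          ∏ k : Fin n, w k.castSucc (Fin.snoc c a₀) (c k) := by
      have hinit (a : α) (k : Fin n) :
          w k.castSucc (Fin.snoc c a) = w k.castSucc (Fin.snoc c a₀) :=
        hw _ _ _ (hsnoc a a₀ fun _ _ => rfl)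
      have hlast (a : α) : w (Fin.last n) (Fin.snoc c a) = w (Fin.last n) (Fin.snoc c a₀) :=
        hw _ _ _ (hsnoc a a₀ fun _ _ => rfl)
      simp only [Fin.prod_univ_castSucc, Fin.snoc_castSucc, Fin.snoc_last, hinit, hlast,
        ← Finset.mul_sum, hsum, mul_one]
    rw [← (Fin.snocEquiv fun _ => α).sum_comp, Fintype.sum_prod_type_right]
    refine (Finset.sum_congr rfl fun c _ => hstep c).trans ?_
    exact sum_prod_adapted_eq_one _
      (fun k c c' h => hw _ _ _ (hsnoc a₀ a₀ fun j hj => h j (Fin.castSucc_lt_castSucc_iff.mp hj)))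
      (fun k c => hsum _ _)

theorem natify_of_lt {β : Type*} {T : ℕ} (hT : 0 < T) (f : Fin T → β) {j : ℕ} (hj : j < T) :
    natify hT f j = f ⟨j, hj⟩ :=
  congrArg f (Fin.ext (Nat.mod_eq_of_lt hj))

def NoReuse {T : ℕ} (g : List (Fin T × Fin T × Bool) → Fin T) : Prop :=
  ∀ h : List (Fin T × Fin T × Bool), h.length < T →
    (h.map fun x => x.1).Nodup → (h.map fun x => x.2.1).Nodup → g h ∉ h.map fun x => x.1

def replyHist (T : ℕ) (g : List (Fin T × Fin T × Bool) → Fin T) (s : Equiv.Perm (Fin T))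
    (c : ℕ → Bool) : ℕ → List (Fin T × Fin T × Bool)
  | 0 => []
  | k + 1 => replyHist T g s c k ++ [(g (replyHist T g s c k), s (g (replyHist T g s c k)), c k)]

section
variable {T : ℕ} {g : List (Fin T × Fin T × Bool) → Fin T} {s : Equiv.Perm (Fin T)}

theorem replyHist_congr {c c' : ℕ → Bool} :
    ∀ k, (∀ j < k, c j = c' j) → replyHist T g s c k = replyHist T g s c' k
  | 0, _ => rfl
  | k + 1, h => by
    rw [replyHist, replyHist, replyHist_congr k fun j hj => h j (hj.trans k.lt_succ_self),
      h k k.lt_succ_self]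

theorem length_replyHist (c : ℕ → Bool) : ∀ k, (replyHist T g s c k).length = k
  | 0 => rfl
  | k + 1 => by simp [replyHist, length_replyHist c k]

theorem map_snd_replyHist (c : ℕ → Bool) : ∀ k,
    (replyHist T g s c k).map (fun x => x.2.1) = ((replyHist T g s c k).map fun x => x.1).map s
  | 0 => rfl
  | k + 1 => by simp [replyHist, map_snd_replyHist c k]

theorem mem_map_fst_replyHist (c : ℕ → Bool) {i : ℕ} :
    ∀ {k}, i < k → g (replyHist T g s c i) ∈ (replyHist T g s c k).map fun x => x.1
  | k + 1, hik => by
    rcases Nat.lt_succ_iff_lt_or_eq.mp hik with hik | rfl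
    · simp [replyHist, mem_map_fst_replyHist c hik]
    · simp [replyHist]

theorem nodup_map_fst_replyHist (hg : NoReuse g) (c : ℕ → Bool) :
    ∀ k ≤ T, ((replyHist T g s c k).map fun x => x.1).Nodup
  | 0, _ => List.nodup_nil
  | k + 1, hk => by
    have ih := nodup_map_fst_replyHist hg c k (k.le_succ.trans hk)
    have hnew := hg _ (by rw [length_replyHist]; omega) ih
      (by rw [map_snd_replyHist]; exact ih.map s.injective)
    rw [replyHist, List.map_append, List.map_singleton, ← List.concat_eq_append]
    exact ih.concat hnew

theorem injective_pick_replyHist (hg : NoReuse g) (c : ℕ → Bool) :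
    Function.Injective fun k : Fin T => g (replyHist T g s c k) := by
  have hne {i j : Fin T} (hij : i < j) : g (replyHist T g s c i) ≠ g (replyHist T g s c j) :=
    fun heq => hg _ (by rw [length_replyHist]; exact j.isLt)
      (nodup_map_fst_replyHist hg c j j.isLt.le)
      (by rw [map_snd_replyHist]; exact (nodup_map_fst_replyHist hg c j j.isLt.le).map s.injective)
      (heq ▸ mem_map_fst_replyHist (g := g) (s := s) c hij)
  intro i j hij
  by_contra hne'
  rcases lt_or_gt_of_ne hne' with h | h
  exacts [hne h hij, hne h hij.symm]

theorem histUpTo_eq_replyHist {a : ℕ → Fin T} {c : ℕ → Bool} :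
    ∀ k, (∀ j < k, a j = s (g (replyHist T g s c j))) → histUpTo T g a c k = replyHist T g s c k
  | 0, _ => rfl
  | k + 1, h => by
    have ih := histUpTo_eq_replyHist k fun j hj => h j (hj.trans k.lt_succ_self)
    rw [histUpTo, replyHist, ih, h k k.lt_succ_self]

noncomputable def replyPerm (hg : NoReuse g) (s : Equiv.Perm (Fin T)) (c : ℕ → Bool) :
    Equiv.Perm (Fin T) :=
  Equiv.ofBijective (fun k => s (g (replyHist T g s c k)))
    (Finite.injective_iff_bijective.mp (s.injective.comp (injective_pick_replyHist hg c)))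

@[simp]
theorem replyPerm_apply (hg : NoReuse g) (c : ℕ → Bool) (k : Fin T) :
    replyPerm hg s c k = s (g (replyHist T g s c k)) :=
  rfl

theorem bpick_replyPerm (hg : NoReuse g) (hT : 0 < T) (c : ℕ → Bool) (k : Fin T) :
    bpick T g (natify hT (replyPerm hg s c)) c k = g (replyHist T g s c k) := by
  rw [bpick, histUpTo_eq_replyHist]
  intro j hj
  rw [natify_of_lt hT _ (hj.trans k.isLt), replyPerm_apply]

theorem matches_iff_eq_replyPerm (hg : NoReuse g) (hT : 0 < T) (c : ℕ → Bool)
    (α : Equiv.Perm (Fin T)) :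
    (∀ k : Fin T, s (bpick T g (natify hT α) c k) = α k) ↔ α = replyPerm hg s c := by
  refine ⟨fun h => ?_, by rintro rfl k; rw [bpick_replyPerm, replyPerm_apply]⟩
  suffices ∀ n (hn : n < T), α ⟨n, hn⟩ = s (g (replyHist T g s c n)) from
    Equiv.ext fun k => this k k.isLt
  intro n
  induction n using Nat.strong_induction_on with
  | _ n ih =>
    intro hn
    have hhist : histUpTo T g (natify hT α) c n = replyHist T g s c n :=
      histUpTo_eq_replyHist n fun j hj => by rw [natify_of_lt hT _ (hj.trans hn), ih j hj]
    rw [← h ⟨n, hn⟩, bpick, hhist]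

end

theorem uniform_matching_prob_general (T : ℕ) (hT : 0 < T)
    (P : Fin T → Fin T → ℝ)
    (g : List (Fin T × Fin T × Bool) → Fin T)
    (hg : ∀ h : List (Fin T × Fin T × Bool), h.length < T →
      (h.map fun x => x.1).Nodup → (h.map fun x => x.2.1).Nodup →
      g h ∉ h.map fun x => x.1)
    (s : Equiv.Perm (Fin T)) :
    ∑ α : Equiv.Perm (Fin T), ∑ c : Fin T → Bool,
      (if ∀ k : Fin T,
            s (bpick T g (natify hT α) (natify hT c) k) = α k then
        (T.factorial : ℝ)⁻¹ *
          ∏ k : Fin T,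
            (if c k then
              P (α k) (bpick T g (natify hT α) (natify hT c) k)
            else
              1 - P (α k) (bpick T g (natify hT α) (natify hT c) k))
      else 0) = (T.factorial : ℝ)⁻¹ := by
  replace hg : NoReuse g := hg
  let pick (c : Fin T → Bool) (k : Fin T) : Fin T := g (replyHist T g s (natify hT c) k)
  have hpick_adapted (k : Fin T) (c c' : Fin T → Bool) (h : ∀ j < k, c j = c' j) :
      pick c k = pick c' k := by
    refine congrArg g (replyHist_congr k fun j hj => ?_)
    rw [natify_of_lt hT _ (hj.trans k.isLt), natify_of_lt hT _ (hj.trans k.isLt)]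
    exact h _ hj
  rw [Finset.sum_comm]
  simp only [matches_iff_eq_replyPerm hg, Finset.sum_ite_eq', Finset.mem_univ, if_true,
    bpick_replyPerm, replyPerm_apply, ← Finset.mul_sum]
  refine (congrArg _ (sum_prod_adapted_eq_one
    (fun k c (b : Bool) => if b then P (s (pick c k)) (pick c k)
      else 1 - P (s (pick c k)) (pick c k))
    ?_ ?_)).trans (mul_one _)
  · intro k c c' h
    simp only [hpick_adapted k c c' h]
  · intro k c
    simp

/-- Suppose Team 1 selects its player uniformly at random among the
remaining ones in every round (encoded by a uniformly random order `α` of its `T`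
players, each order having probability `1/T!`), while Team 2 plays an arbitrary
adaptive pure strategy `g` (which never reuses a player on any valid history).
The outcome of round `k` is `1` with probability `P a_k b_k`, conditionally
independently given the history.  Then for every bijection `s` of `{1,…,T}`,
the probability that the final matching `M` (defined by `M b_k = a_k`) equals `s`
is exactly `1/T!`. -/
theorem uniform_matching_prob (T : ℕ) (hT : 0 < T)
    (P : Fin T → Fin T → ℝ) (hP : ∀ i j, P i j ∈ Set.Icc (0 : ℝ) 1)
    (g : List (Fin T × Fin T × Bool) → Fin T)
    (hg : ∀ h : List (Fin T × Fin T × Bool), h.length < T →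
      (h.map fun x => x.1).Nodup → (h.map fun x => x.2.1).Nodup →
      g h ∉ h.map fun x => x.1)
    (s : Equiv.Perm (Fin T)) :
    ∑ α : Equiv.Perm (Fin T), ∑ c : Fin T → Bool,
      (if ∀ k : Fin T,
            s (bpick T g (natify hT α) (natify hT c) k) = α k then
        (T.factorial : ℝ)⁻¹ *
          ∏ k : Fin T,
            (if c k then
              P (α k) (bpick T g (natify hT α) (natify hT c) k)
            else
              1 - P (α k) (bpick T g (natify hT α) (natify hT c) k))
      else 0) = (T.factorial : ℝ)⁻¹ :=
  uniform_matching_prob_general T hT P g hg s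
end

section
/- Let T = 2, m = 2, n = 3, U = U_E (so U_E(t) = t − 1), and let P be the 2×3 matrix with rows (0,0,1) and (1,1,0). Then V(G(2,P,U_E)) = −1/3, but the uniformly random strategy of Team 1 guarantees only −1/2: min over j ∈ {1,2,3} of (1/2)·Σ_{i=1}^{2} (P i j·V({i},{j},1) + (1−P i j)·V({i},{j},0)) = −1/2 < −1/3. Hence, when the opposing team has redundant players, the uniformly random strategy need not be an equilibrium strategy even for a team with no redundant players. -/
/-- The utility function `U_E(t) = t - T/2`. -/
noncomputable def UE (T : ℕ) : ℕ → ℝ := fun t => (t : ℝ) - (T : ℝ) / 2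

open Finset

variable {m n : ℕ}

def IsMixedStrategy (X : Finset (Fin m)) (p : Fin m → ℝ) : Prop :=
  (∀ i, 0 ≤ p i) ∧ (∀ i ∈ X, p i = 0) ∧ ∑ i, p i = 1

noncomputable def guaranteedPayoff (Y : Finset (Fin n)) (G : Fin m → Fin n → ℝ)
    (p : Fin m → ℝ) : ℝ :=
  sInf {u | ∃ j, j ∉ Y ∧ u = ∑ i, p i * G i j}

noncomputable def stageValue (X : Finset (Fin m)) (Y : Finset (Fin n))
    (G : Fin m → Fin n → ℝ) : ℝ :=
  sSup (guaranteedPayoff Y G '' {p | IsMixedStrategy X p})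

theorem gval_zero (P : Fin m → Fin n → ℝ) (U : ℕ → ℝ) (X : Finset (Fin m)) (Y : Finset (Fin n))
    (w : ℕ) : gval m n P U 0 X Y w = U w := by
  rw [gval]

theorem gval_succ_s11 (P : Fin m → Fin n → ℝ) (U : ℕ → ℝ) (r : ℕ) (X : Finset (Fin m))
    (Y : Finset (Fin n)) (w : ℕ) :
    gval m n P U (r + 1) X Y w = stageValue X Y fun i j =>
      P i j * gval m n P U r (insert i X) (insert j Y) (w + 1) +
        (1 - P i j) * gval m n P U r (insert i X) (insert j Y) w := by
  rw [gval, stageValue]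
  congr 1
  ext v
  simp only [Set.mem_ofPred_eq, Set.mem_image, IsMixedStrategy, guaranteedPayoff, and_assoc,
    eq_comm]

theorem IsMixedStrategy.exists_notMem {Y : Finset (Fin n)} {q : Fin n → ℝ}
    (hq : IsMixedStrategy Y q) : ∃ j, j ∉ Y := by
  by_contra! hY
  have : ∑ j, q j = 0 := sum_eq_zero fun j _ => hq.2.1 j (hY j)
  linarith [hq.2.2]

theorem IsMixedStrategy.single {X : Finset (Fin m)} {a : Fin m} (ha : a ∉ X) :
    IsMixedStrategy X (Pi.single a 1) := by
  refine ⟨fun i => ?_, fun i hi => ?_, by simp⟩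
  · by_cases h : i = a <;> simp [h]
  · simp [ne_of_mem_of_not_mem hi ha]

variable {X : Finset (Fin m)} {Y : Finset (Fin n)} {G : Fin m → Fin n → ℝ} {v : ℝ}

theorem guaranteedPayoff_le {p : Fin m → ℝ} {j : Fin n} (hj : j ∉ Y) :
    guaranteedPayoff Y G p ≤ ∑ i, p i * G i j := by
  refine csInf_le ?_ ⟨j, hj, rfl⟩
  refine ((Set.finite_range fun j => ∑ i, p i * G i j).subset ?_).bddBelow
  rintro _ ⟨j, -, rfl⟩
  exact ⟨j, rfl⟩

theorem le_guaranteedPayoff {p : Fin m → ℝ} (hY : ∃ j, j ∉ Y)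
    (h : ∀ j ∉ Y, v ≤ ∑ i, p i * G i j) : v ≤ guaranteedPayoff Y G p := by
  obtain ⟨j, hj⟩ := hY
  refine le_csInf ⟨_, j, hj, rfl⟩ ?_
  rintro _ ⟨j, hj, rfl⟩
  exact h j hj

/-- Weak duality: average the guarantee of `p` over the opponent's mixed strategy `q`. -/
theorem guaranteedPayoff_le_of_isMixedStrategy {p : Fin m → ℝ} {q : Fin n → ℝ}
    (hp : IsMixedStrategy X p) (hq : IsMixedStrategy Y q) (h : ∀ i ∉ X, ∑ j, q j * G i j ≤ v) :
    guaranteedPayoff Y G p ≤ v := by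
  set g := guaranteedPayoff Y G p
  calc g = ∑ j, q j * g := by rw [← sum_mul, hq.2.2, one_mul]
    _ ≤ ∑ j, q j * ∑ i, p i * G i j := by
        refine sum_le_sum fun j _ => ?_
        by_cases hj : j ∈ Y
        · simp [hq.2.1 j hj]
        · exact mul_le_mul_of_nonneg_left (guaranteedPayoff_le hj) (hq.1 j)
    _ = ∑ i, p i * ∑ j, q j * G i j := by
        simp only [mul_sum]
        rw [sum_comm]
        simp only [mul_left_comm]
    _ ≤ ∑ i, p i * v := by
        refine sum_le_sum fun i _ => ?_
        by_cases hi : i ∈ X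
        · simp [hp.2.1 i hi]
        · exact mul_le_mul_of_nonneg_left (h i hi) (hp.1 i)
    _ = v := by rw [← sum_mul, hp.2.2, one_mul]

theorem stageValue_eq_of_saddlePoint {p : Fin m → ℝ} {q : Fin n → ℝ}
    (hp : IsMixedStrategy X p) (hq : IsMixedStrategy Y q)
    (hpv : ∀ j ∉ Y, v ≤ ∑ i, p i * G i j) (hqv : ∀ i ∉ X, ∑ j, q j * G i j ≤ v) :
    stageValue X Y G = v := by
  have hv : guaranteedPayoff Y G p = v :=
    (guaranteedPayoff_le_of_isMixedStrategy hp hq hqv).antisymm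
      (le_guaranteedPayoff hq.exists_notMem hpv)
  refine IsGreatest.csSup_eq ⟨⟨p, hp, hv⟩, ?_⟩
  rintro _ ⟨p', hp', rfl⟩
  exact guaranteedPayoff_le_of_isMixedStrategy hp' hq hqv

theorem stageValue_eq_of_pureSaddlePoint {a : Fin m} {b : Fin n} (ha : a ∉ X) (hb : b ∉ Y)
    (hrow : ∀ j ∉ Y, G a b ≤ G a j) (hcol : ∀ i ∉ X, G i b ≤ G a b) :
    stageValue X Y G = G a b :=
  stageValue_eq_of_saddlePoint (.single ha) (.single hb) (by simpa [Pi.single_apply] using hrow)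
    (by simpa [Pi.single_apply] using hcol)

theorem UE_step (T w : ℕ) (x : ℝ) : x * UE T (w + 1) + (1 - x) * UE T w = UE T w + x := by
  simp only [UE]
  push_cast
  ring

section Example

local notation "P₀" => (![![(0 : ℝ), 0, 1], ![1, 1, 0]] : Fin 2 → Fin 3 → ℝ)

theorem gval_example_last_round (i : Fin 2) (j : Fin 3) (w : ℕ) :
    gval 2 3 P₀ (UE 2) 1 {i} {j} w = UE 2 w + if i = 0 ∧ j = 2 then 1 else 0 := by
  simp only [gval_succ_s11, gval_zero, UE_step]
  -- Team 1 must field `i + 1`; the table lists Team 2's best reply among its players other than `j`.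
  rw [stageValue_eq_of_pureSaddlePoint (a := i + 1) (b := ![![2, 2, 0], ![1, 0, 0]] i j)] <;>
    fin_cases i <;> fin_cases j <;> (try intro k hk; fin_cases k) <;> simp_all

theorem gval_example_first_round_payoff (i : Fin 2) (j : Fin 3) :
    P₀ i j * gval 2 3 P₀ (UE 2) 1 {i} {j} 1 + (1 - P₀ i j) * gval 2 3 P₀ (UE 2) 1 {i} {j} 0 =
      ![![-1, -1, 1], ![0, 0, -1]] i j := by
  fin_cases i <;> fin_cases j <;> simp [gval_example_last_round, UE]

theorem stageValue_example_first_round :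
    stageValue ∅ ∅ (![![-1, -1, 1], ![0, 0, -1]] : Fin 2 → Fin 3 → ℝ) = -1/3 := by
  refine stageValue_eq_of_saddlePoint (p := ![1/3, 2/3]) (q := ![2/3, 0, 1/3]) ?_ ?_ ?_ ?_
  · refine ⟨fun i => ?_, by simp, ?_⟩
    · fin_cases i <;> norm_num
    · norm_num [Fin.sum_univ_two]
  · refine ⟨fun j => ?_, by simp, ?_⟩
    · fin_cases j <;> norm_num
    · simp [Fin.sum_univ_three]; norm_num
  · intro j _
    fin_cases j <;> norm_num [Fin.sum_univ_two]
  · intro i _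
    fin_cases i <;> simp [Fin.sum_univ_three] <;> norm_num

end Example

/-- For `T = m = 2`, `n = 3`, `U = U_E` and
`P = [[0,0,1],[1,1,0]]`: the value of the game is `-1/3`, but the uniformly random
strategy of Team 1 only guarantees `-1/2 < -1/3`.  Hence the uniformly random
strategy need not be an equilibrium strategy for a team with no redundant players
when the opposing team has redundant players. -/
theorem uniform_not_SPE_with_redundant_opponent :
    gval 2 3 ![![(0 : ℝ), 0, 1], ![1, 1, 0]] (UE 2) 2 ∅ ∅ 0 = -1/3 ∧
    sInf {u : ℝ | ∃ j : Fin 3, u = (1 / 2 : ℝ) * ∑ i : Fin 2,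
        (![![(0 : ℝ), 0, 1], ![1, 1, 0]] i j *
            gval 2 3 ![![(0 : ℝ), 0, 1], ![1, 1, 0]] (UE 2) 1 {i} {j} 1 +
          (1 - ![![(0 : ℝ), 0, 1], ![1, 1, 0]] i j) *
            gval 2 3 ![![(0 : ℝ), 0, 1], ![1, 1, 0]] (UE 2) 1 {i} {j} 0)} = -1/2 ∧
    (-1/2 : ℝ) < -1/3 := by
  refine ⟨?_, ?_, by norm_num⟩
  · rw [gval_succ_s11]
    simp only [insert_empty, zero_add, gval_example_first_round_payoff]
    exact stageValue_example_first_round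
  · simp only [gval_example_first_round_payoff]
    refine IsLeast.csInf_eq ⟨⟨0, by norm_num⟩, ?_⟩
    rintro _ ⟨j, rfl⟩
    fin_cases j <;> norm_num [Fin.sum_univ_two]
end

section
/- Let T ≥ 2, m = 2T−2, n = 2T−1, U = U_E (so U_E(t) = t − T/2), and let P be the m×n matrix with P i j = 1 if i = j ≤ T and P i j = 0 otherwise (Team 1 has T ordinary players, player i beating only opponent i, plus T−2 dominated players with all-zero rows; Team 2 has T−1 extra players who beat every opponent). Then V(G(T,P,U_E)) = −T/2; i.e., Team 2 can win every one of the T rounds with certainty when Team 1 has only T−2 dominated players. -/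
open Finset

lemma sSup_strategy_values_eq {ι : Type*} [Fintype ι] {X : Finset ι} (hX : ∃ i, i ∉ X)
    {g : (ι → ℝ) → ℝ} {c : ℝ}
    (hg : ∀ p : ι → ℝ, (∀ i, 0 ≤ p i) → (∀ i ∈ X, p i = 0) → ∑ i, p i = 1 → g p = c) :
    sSup {v : ℝ | ∃ p : ι → ℝ,
      (∀ i, 0 ≤ p i) ∧ (∀ i ∈ X, p i = 0) ∧ ∑ i, p i = 1 ∧ v = g p} = c := by
  classical
  obtain ⟨i₀, hi₀⟩ := hX
  set e : ι → ℝ := fun i => if i = i₀ then 1 else 0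
  have he0 : ∀ i, 0 ≤ e i := fun i => by positivity
  have heX : ∀ i ∈ X, e i = 0 := fun i hi => if_neg (ne_of_mem_of_not_mem hi hi₀)
  have he1 : ∑ i, e i = 1 := by simp [e]
  have hvalues : {v : ℝ | ∃ p : ι → ℝ,
      (∀ i, 0 ≤ p i) ∧ (∀ i ∈ X, p i = 0) ∧ ∑ i, p i = 1 ∧ v = g p} = {c} := by
    ext v
    constructor
    · rintro ⟨p, hp0, hpX, hp1, rfl⟩
      exact hg p hp0 hpX hp1
    · rintro rfl
      exact ⟨e, he0, heX, he1, (hg e he0 heX he1).symm⟩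
  rw [hvalues, csSup_singleton]

lemma sInf_column_values_eq {κ : Type*} {Y : Finset κ} {g : κ → ℝ} {c : ℝ}
    (hge : ∀ j ∉ Y, c ≤ g j) (heq : ∃ j ∉ Y, g j = c) :
    sInf {u : ℝ | ∃ j, j ∉ Y ∧ u = g j} = c := by
  obtain ⟨j₀, hj₀, hgj₀⟩ := heq
  refine IsLeast.csInf_eq ⟨⟨j₀, hj₀, hgj₀.symm⟩, ?_⟩
  rintro u ⟨j, hj, rfl⟩
  exact hge j hj

lemma sum_mul_bernoulli_payoff {ι : Type*} [Fintype ι] (p q : ι → ℝ) (a b : ℝ)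
    (hp : ∑ i, p i = 1) :
    ∑ i, p i * (q i * a + (1 - q i) * b) = b + (a - b) * ∑ i, p i * q i := by
  have hterm : ∀ i, p i * (q i * a + (1 - q i) * b) = p i * b + (a - b) * (p i * q i) :=
    fun i => by ring
  simp only [hterm, sum_add_distrib, ← sum_mul, ← mul_sum, hp, one_mul]

section BeatsAtMostOne

variable {m n : ℕ} {P : Fin m → Fin n → ℝ} {U : ℕ → ℝ} (f : Fin m → Fin n)

lemma exists_sure_win_of_beats_at_most_one (hP : ∀ i j, P i j ≠ 0 → j = f i) (hmn : m < n)
    {X : Finset (Fin m)} {Y : Finset (Fin n)} (hXY : #Y ≤ #X)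
    {p : Fin m → ℝ} (hpX : ∀ i ∈ X, p i = 0) :
    ∃ j ∉ Y, ∀ i, p i * P i j = 0 := by
  set S := univ.filter fun i => p i ≠ 0
  have hdisj : Disjoint X S := disjoint_left.2 fun i hiX hiS => (mem_filter.1 hiS).2 (hpX i hiX)
  have hcard : #(Y ∪ S.image f) < #(univ : Finset (Fin n)) :=
    calc #(Y ∪ S.image f) ≤ #Y + #S := (card_union_le _ _).trans (by gcongr; exact card_image_le)
      _ ≤ #(X ∪ S) := by rw [card_union_of_disjoint hdisj]; omega
      _ ≤ m := card_le_univ _ |>.trans_eq (Fintype.card_fin m)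
      _ < #(univ : Finset (Fin n)) := by simpa using hmn
  obtain ⟨j, -, hj⟩ := exists_mem_notMem_of_card_lt_card hcard
  rw [mem_union, not_or] at hj
  refine ⟨j, hj.1, fun i => ?_⟩
  by_cases hpi : p i = 0
  · rw [hpi, zero_mul]
  · have hPij : P i j = 0 := by
      by_contra hne
      exact hj.2 (mem_image.2 ⟨i, by simpa [S] using hpi, (hP i j hne).symm⟩)
    rw [hPij, mul_zero]

lemma gval_eq_of_beats_at_most_one (hP : ∀ i j, P i j ≠ 0 → j = f i) (hP0 : ∀ i j, 0 ≤ P i j)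
    (hmn : m < n) (hU : Monotone U) (r : ℕ) :
    ∀ (X : Finset (Fin m)) (Y : Finset (Fin n)) (w : ℕ), #X = #Y → #X + r ≤ m →
      gval m n P U r X Y w = U w := by
  induction r with
  | zero => intro X Y w _ _; rfl
  | succ r ih =>
    intro X Y w hXY hr
    rw [gval]
    obtain ⟨i₀, -, hi₀⟩ := exists_mem_notMem_of_card_lt_card
      (s := X) (t := univ) (by simp only [card_univ, Fintype.card_fin]; omega)
    refine sSup_strategy_values_eq ⟨i₀, hi₀⟩ fun p hp0 hpX hp1 => ?_
    have hpayoff : ∀ j ∉ Y, ∑ i, p i *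
        (P i j * gval m n P U r (insert i X) (insert j Y) (w + 1) +
          (1 - P i j) * gval m n P U r (insert i X) (insert j Y) w) =
        U w + (U (w + 1) - U w) * ∑ i, p i * P i j := by
      intro j hj
      rw [← sum_mul_bernoulli_payoff p (P · j) _ _ hp1]
      refine sum_congr rfl fun i _ => ?_
      by_cases hiX : i ∈ X
      · rw [hpX i hiX, zero_mul, zero_mul]
      · have hcard : #(insert i X) = #(insert j Y) := by
          rw [card_insert_of_notMem hiX, card_insert_of_notMem hj, hXY]
        have hr' : #(insert i X) + r ≤ m := by rw [card_insert_of_notMem hiX]; omega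
        rw [ih _ _ _ hcard hr', ih _ _ _ hcard hr']
    obtain ⟨j₀, hj₀, hwin⟩ := exists_sure_win_of_beats_at_most_one f hP hmn hXY.ge hpX
    refine sInf_column_values_eq (fun j hj => ?_) ⟨j₀, hj₀, ?_⟩
    · rw [hpayoff j hj]
      exact le_add_of_nonneg_right <| mul_nonneg (sub_nonneg.2 (hU w.le_succ)) <|
        sum_nonneg fun i _ => mul_nonneg (hp0 i) (hP0 i j)
    · rw [hpayoff j₀ hj₀, sum_eq_zero fun i _ => hwin i, mul_zero, add_zero]

end BeatsAtMostOne

lemma monotone_UE (T : ℕ) : Monotone (UE T) := fun a b hab => by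
  simp only [UE]
  gcongr

/-- Let `T ≥ 2`, `m = 2T-2`, `n = 2T-1`, `U = U_E`, and let
`P i j = 1` iff `i = j ≤ T` (Team 1 has `T` ordinary players plus `T-2` dominated
ones; Team 2 has `T-1` extra invincible players).  Then the value is `-T/2`:
Team 2 can win every round with certainty. -/
theorem few_dominated_players_lose_all (T : ℕ) (hT : 2 ≤ T) :
    gval (2 * T - 2) (2 * T - 1)
      (fun i j => if (i : ℕ) = (j : ℕ) ∧ (i : ℕ) < T then (1 : ℝ) else 0)
      (UE T) T ∅ ∅ 0 = -(T : ℝ) / 2 := by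
  have hP : ∀ (i : Fin (2 * T - 2)) (j : Fin (2 * T - 1)),
      (if (i : ℕ) = (j : ℕ) ∧ (i : ℕ) < T then (1 : ℝ) else 0) ≠ 0 →
        j = Fin.castLE (by omega) i := by
    intro i j hij
    ext
    exact ((ite_ne_right_iff.1 hij).1.1).symm
  have hP0 : ∀ (i : Fin (2 * T - 2)) (j : Fin (2 * T - 1)),
      0 ≤ (if (i : ℕ) = (j : ℕ) ∧ (i : ℕ) < T then (1 : ℝ) else 0) := by
    intros; positivity
  rw [gval_eq_of_beats_at_most_one _ hP hP0 (by omega) (monotone_UE T) T ∅ ∅ 0 rfl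
    (by simp only [card_empty]; omega)]
  simp [UE, neg_div]
end

section
/- Let T ≥ 2, m = T + ⌊T/2⌋ − 1, n = T + ⌊T/2⌋, U = U_M, and let P be the m×n matrix with P i j = 1 if i = j ≤ T and P i j = 0 otherwise (Team 1 has T ordinary players, player i beating only opponent i, plus ⌊T/2⌋−1 dominated players with all-zero rows; Team 2 has ⌊T/2⌋ extra players who beat every opponent). Then V(G(T,P,U_M)) = −1; i.e., with only ⌊T/2⌋−1 dominated players, Team 2 can always win strictly more than half of the rounds. -/
/-- The utility function `U_M(t)`: `1` if `t > T/2`, `0` if `t = T/2`, `-1` if `t < T/2`. -/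
def UM (T : ℕ) : ℕ → ℝ := fun t => if T < 2 * t then 1 else if 2 * t = T then 0 else -1

open Finset

/-! Team 2 always answers with a column that none of Team 1's remaining players can beat: either
column `i` for a player `i` of Team 1 who has already played, or a column beyond all of Team 1's
indices. Matching each played row `i` with column `i` shows that more such columns exist than
rounds have been played, as Team 2 has more players than Team 1. So Team 1 wins no round and
the value is `U_M(0) = -1`. -/

theorem Real.abs_sSup_le {s : Set ℝ} {C : ℝ} (hs : ∀ x ∈ s, |x| ≤ C) (hC : 0 ≤ C) :
    |sSup s| ≤ C :=
  have hbdd : BddBelow s ∧ BddAbove s :=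
    ⟨⟨-C, fun x hx => (abs_le.mp (hs x hx)).1⟩,
      ⟨C, fun x hx => (abs_le.mp (hs x hx)).2⟩⟩
  abs_le.mpr
    ⟨(Real.le_sInf (fun x hx => (abs_le.mp (hs x hx)).1) (by linarith)).trans
        (Real.sInf_le_sSup s hbdd.1 hbdd.2),
      Real.sSup_le (fun x hx => (abs_le.mp (hs x hx)).2) hC⟩

theorem Real.abs_sInf_le {s : Set ℝ} {C : ℝ} (hs : ∀ x ∈ s, |x| ≤ C) (hC : 0 ≤ C) :
    |sInf s| ≤ C := by
  rw [Real.sInf_def, abs_neg]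
  exact Real.abs_sSup_le (fun x hx => by simpa only [abs_neg] using hs (-x) hx) hC

theorem abs_mul_add_one_sub_mul_le {q a b C : ℝ} (hq : q ∈ Set.Icc 0 1) (ha : |a| ≤ C)
    (hb : |b| ≤ C) : |q * a + (1 - q) * b| ≤ C :=
  calc |q * a + (1 - q) * b| ≤ q * |a| + (1 - q) * |b| := by
        simpa only [abs_mul, abs_of_nonneg hq.1, abs_of_nonneg (sub_nonneg.mpr hq.2)] using
          abs_add_le (q * a) ((1 - q) * b)
    _ ≤ q * C + (1 - q) * C :=
        add_le_add (mul_le_mul_of_nonneg_left ha hq.1)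
          (mul_le_mul_of_nonneg_left hb (sub_nonneg.mpr hq.2))
    _ = C := by ring

theorem abs_sum_mul_le {ι : Type*} [Fintype ι] {p x : ι → ℝ} {C : ℝ}
    (hp0 : ∀ i, 0 ≤ p i) (hp1 : ∑ i, p i = 1) (hx : ∀ i, |x i| ≤ C) :
    |∑ i, p i * x i| ≤ C :=
  calc |∑ i, p i * x i| ≤ ∑ i, p i * |x i| := by
        simpa only [abs_mul, abs_of_nonneg (hp0 _)] using
          abs_sum_le_sum_abs (fun i => p i * x i) univ
    _ ≤ ∑ i, p i * C := sum_le_sum fun i _ => mul_le_mul_of_nonneg_left (hx i) (hp0 i)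
    _ = C := by rw [← sum_mul, hp1, one_mul]

section gval

variable {m n : ℕ} {P : Fin m → Fin n → ℝ} {U : ℕ → ℝ}

theorem abs_gval_le {C : ℝ} (hP : ∀ i j, P i j ∈ Set.Icc 0 1) (hU : ∀ w, |U w| ≤ C) :
    ∀ r X Y w, |gval m n P U r X Y w| ≤ C := by
  have hC : 0 ≤ C := (abs_nonneg _).trans (hU 0)
  intro r
  induction r with
  | zero => exact fun _ _ w => hU w
  | succ r ih =>
    intro X Y w
    rw [gval]
    refine Real.abs_sSup_le ?_ hC
    rintro _ ⟨p, hp0, -, hp1, rfl⟩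
    refine Real.abs_sInf_le ?_ hC
    rintro _ ⟨j, -, rfl⟩
    exact abs_sum_mul_le hp0 hp1 fun i =>
      abs_mul_add_one_sub_mul_le (hP i j) (ih _ _ _) (ih _ _ _)

theorem gval_succ_le_of_column {r : ℕ} {X : Finset (Fin m)} {Y : Finset (Fin n)} {w : ℕ}
    {c : ℝ} (hX : ∃ i, i ∉ X) {j : Fin n} (hj : j ∉ Y)
    (h : ∀ i ∉ X, P i j * gval m n P U r (insert i X) (insert j Y) (w + 1) +
      (1 - P i j) * gval m n P U r (insert i X) (insert j Y) w ≤ c) :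
    gval m n P U (r + 1) X Y w ≤ c := by
  classical
  obtain ⟨i₀, hi₀⟩ := hX
  rw [gval]
  refine csSup_le ⟨_, Pi.single i₀ 1, fun i => ?_, fun i hi => ?_, by simp, rfl⟩ ?_
  · by_cases hi : i = i₀ <;> simp [hi]
  · exact Pi.single_eq_of_ne (ne_of_mem_of_not_mem hi hi₀) 1
  have hbdd (f : Fin n → ℝ) : BddBelow {u | ∃ j ∉ Y, u = f j} :=
    ((Set.finite_range f).subset (by rintro _ ⟨j', -, rfl⟩; exact ⟨j', rfl⟩)).bddBelow
  rintro _ ⟨p, hp0, hpX, hp1, rfl⟩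
  calc sInf _ ≤ ∑ i, p i * (P i j * gval m n P U r (insert i X) (insert j Y) (w + 1) +
        (1 - P i j) * gval m n P U r (insert i X) (insert j Y) w) :=
        csInf_le (hbdd _) ⟨j, hj, rfl⟩
    _ ≤ ∑ i, p i * c := sum_le_sum fun i _ => by
        by_cases hi : i ∈ X
        · simp [hpX i hi]
        · exact mul_le_mul_of_nonneg_left (h i hi) (hp0 i)
    _ = c := by rw [← sum_mul, hp1, one_mul]

/-- The unbeatable columns include the column of every row already played and the last column,
which no row can beat. -/
theorem exists_unbeatable_column (hP : ∀ (i : Fin m) (j : Fin n), (i : ℕ) ≠ j → P i j = 0)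
    (hmn : m < n) {X : Finset (Fin m)} {Y : Finset (Fin n)} (hYX : #Y ≤ #X) :
    ∃ j ∉ Y, ∀ i ∉ X, P i j = 0 := by
  classical
  set Z := univ.filter fun j : Fin n => ∀ i ∉ X, P i j = 0
  have hXZ : X.map (Fin.castLEEmb hmn.le) ⊆ Z := by
    simp only [subset_iff, mem_map, Fin.castLEEmb_apply, forall_exists_index, and_imp]
    rintro _ i hi rfl
    refine mem_filter.mpr ⟨mem_univ _, fun i' hi' => hP _ _ fun h => hi' ?_⟩
    have : i' = i := Fin.ext (by simpa using h)
    rwa [this]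
  have hlast : (⟨n - 1, by omega⟩ : Fin n) ∈ Z \ X.map (Fin.castLEEmb hmn.le) := by
    simp only [Z, mem_sdiff, mem_filter, mem_univ, true_and, mem_map, Fin.castLEEmb_apply,
      not_exists, not_and]
    refine ⟨fun i _ => hP _ _ (show (i : ℕ) ≠ n - 1 by omega), fun i _ h => ?_⟩
    have : (i : ℕ) = n - 1 := congrArg Fin.val h
    omega
  have hcard : #X < #Z := by
    simpa only [card_map] using
      card_lt_card ((ssubset_iff_of_subset hXZ).mpr ⟨_, mem_sdiff.mp hlast⟩)
  obtain ⟨j, hjZ, hjY⟩ := exists_mem_notMem_of_card_lt_card (hYX.trans_lt hcard)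
  exact ⟨j, hjY, (mem_filter.mp hjZ).2⟩

theorem gval_le_of_offDiag_eq_zero (hP : ∀ (i : Fin m) (j : Fin n), (i : ℕ) ≠ j → P i j = 0)
    (hmn : m < n) (w : ℕ) :
    ∀ r (X : Finset (Fin m)) (Y : Finset (Fin n)), #Y ≤ #X → r + #X ≤ m →
      gval m n P U r X Y w ≤ U w := by
  intro r
  induction r with
  | zero => exact fun _ _ _ _ => le_rfl
  | succ r ih =>
    intro X Y hYX hr
    obtain ⟨j, hj, hjX⟩ := exists_unbeatable_column hP hmn hYX
    have hX : ∃ i, i ∉ X := by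
      by_contra! h
      rw [eq_univ_of_forall h, card_univ, Fintype.card_fin] at hr
      omega
    refine gval_succ_le_of_column hX hj fun i hi => ?_
    rw [hjX i hi, zero_mul, sub_zero, one_mul, zero_add]
    exact ih _ _ (by rw [card_insert_of_notMem hi, card_insert_of_notMem hj]; omega)
      (by rw [card_insert_of_notMem hi]; omega)

end gval

theorem abs_UM_le_one (T w : ℕ) : |UM T w| ≤ 1 := by
  unfold UM
  split_ifs <;> norm_num

theorem UM_zero {T : ℕ} (hT : T ≠ 0) : UM T 0 = -1 := by
  simp [UM, Ne.symm hT]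

/-- Let `T ≥ 2`, `m = T + ⌊T/2⌋ - 1`, `n = T + ⌊T/2⌋`, `U = U_M`,
and let `P i j = 1` iff `i = j ≤ T` (Team 1 has `T` ordinary players plus
`⌊T/2⌋ - 1` dominated ones; Team 2 has `⌊T/2⌋` extra invincible players).  Then the
value is `-1`: Team 2 can always win strictly more than half of the rounds. -/
theorem few_dominated_players_lose_UM (T : ℕ) (hT : 2 ≤ T) :
    gval (T + T / 2 - 1) (T + T / 2)
      (fun i j => if (i : ℕ) = (j : ℕ) ∧ (i : ℕ) < T then (1 : ℝ) else 0)
      (UM T) T ∅ ∅ 0 = -1 := by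
  set P : Fin (T + T / 2 - 1) → Fin (T + T / 2) → ℝ :=
    fun i j => if (i : ℕ) = (j : ℕ) ∧ (i : ℕ) < T then (1 : ℝ) else 0
  have hP : ∀ i j, P i j ∈ Set.Icc 0 1 := fun i j => by
    simp only [P]
    split_ifs <;> norm_num
  refine le_antisymm ?_ (abs_le.mp (abs_gval_le hP (abs_UM_le_one T) T ∅ ∅ 0)).1
  calc gval _ _ P (UM T) T ∅ ∅ 0 ≤ UM T 0 :=
        gval_le_of_offDiag_eq_zero (fun i j hij => if_neg fun h => hij h.1) (by omega) 0 T ∅ ∅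
          le_rfl (by rw [card_empty]; omega)
    _ = -1 := UM_zero (by omega)
end
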